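/- Let γ > 0, 0 ≤ μ_a < 1, 0 ≤ μ_b < 1, a(x) = x^{μ_a} on [0,1], b(x) = (1+x)^{μ_b} on [−1,0]. Then for every f ∈ L²(0,1), g ∈ L²(−1,0) and c ∈ ℂ, there exists a unique pair (u, w) with u ∈ V²_a(0,1) and w ∈ V²_b(−1,0) such that (a u')' = f a.e. on (0,1), (b w')' = g a.e. on (−1,0), w(−1) = 0, u(0) = w(0), lim_{x→0⁺}(a u')(x) = (b w')(0), and γ u(1) + u'(1) = c. -/

import Mathlib

open MeasureTheory Set Filter Topology

/-- `u ∈ V¹_α(x₀, ℓ)` (complex-valued): `u ∈ L²(x₀, ℓ)`, `u` is locally absolutely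
continuous on `(x₀, ℓ]` with a.e. derivative `u'` (expressed via the fundamental theorem of
calculus on compact subintervals of `(x₀, ℓ]`), and `√α · u' ∈ L²(x₀, ℓ)`. -/
def MemV1C (x₀ ℓ : ℝ) (α : ℝ → ℝ) (u u' : ℝ → ℂ) : Prop :=
  MemLp u 2 (volume.restrict (Ioo x₀ ℓ)) ∧
  (∀ x y : ℝ, x₀ < x → x ≤ y → y ≤ ℓ →
    IntervalIntegrable u' volume x y ∧ u y - u x = ∫ t in x..y, u' t) ∧
  MemLp (fun x => Real.sqrt (α x) • u' x) 2 (volume.restrict (Ioo x₀ ℓ))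

/-- `u ∈ V²_α(x₀, ℓ)` (complex-valued): `u ∈ V¹_α(x₀, ℓ)` and `α·u' ∈ H¹(x₀, ℓ)`, i.e.
`α·u' ∈ L²`, it is absolutely continuous with a.e. derivative `g' = (α u')' ∈ L²`. -/
def MemV2C (x₀ ℓ : ℝ) (α : ℝ → ℝ) (u u' g' : ℝ → ℂ) : Prop :=
  MemV1C x₀ ℓ α u u' ∧
  MemLp (fun x => α x • u' x) 2 (volume.restrict (Ioo x₀ ℓ)) ∧
  MemLp g' 2 (volume.restrict (Ioo x₀ ℓ)) ∧
  ∀ x y : ℝ, x₀ < x → x ≤ y → y ≤ ℓ →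
    IntervalIntegrable g' volume x y ∧ α y • u' y - α x • u' x = ∫ t in x..y, g' t

/-- The boundary value problem for the resolvent at `0` (weakly degenerate left string,
`μ_b < 1`): `u ∈ V²_a(0,1)`, `w ∈ V²_b(-1,0)`, `(a u')' = f` a.e. on `(0,1)`,
`(b w')' = g` a.e. on `(-1,0)`, `w(-1) = 0`, `u(0) = w(0)`,
`lim_{x→0⁺}(a u')(x) = (b w')(0)`, and `γ u(1) + u'(1) = c`. -/
def SolWeak (γ μa μb : ℝ) (f g : ℝ → ℂ) (c : ℂ) (u u' gu w w' gw : ℝ → ℂ) : Prop :=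
  MemV2C 0 1 (fun x => x ^ μa) u u' gu ∧
  MemV2C (-1) 0 (fun x => (1 + x) ^ μb) w w' gw ∧
  gu =ᵐ[volume.restrict (Ioo (0 : ℝ) 1)] f ∧
  gw =ᵐ[volume.restrict (Ioo (-1 : ℝ) 0)] g ∧
  Tendsto w (𝓝[>] (-1 : ℝ)) (𝓝 0) ∧
  Tendsto u (𝓝[>] (0 : ℝ)) (𝓝 (w 0)) ∧
  Tendsto (fun x : ℝ => (x ^ μa : ℝ) • u' x) (𝓝[>] (0 : ℝ))
    (𝓝 ((((1 : ℝ) + 0) ^ μb : ℝ) • w' 0)) ∧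
  (γ : ℂ) * u 1 + u' 1 = c

/-!
The problem is affine in `(u, w)`. If two solutions share `f` and `g`, their difference has
vanishing `(a u')'` and `(b w')'`, hence constant fluxes, which the transmission condition makes
equal, say to `K`. Integrating `u' = K / a` and `w' = K / b` (integrable because `μ < 1`) from
the boundary conditions at `-1` and `0` shows that the difference is `K Q`, with `Q` the
continuous primitive of `1/b` on `[-1, 0]` followed by that of `1/a` on `[0, 1]`. The Robin
condition then reads `c₁ - c = K (1 + γ Q(1))`, and `1 + γ Q(1) > 0`. This gives uniqueness,
and also existence: prescribing the flux `B` at `-1` and integrating twice solves everything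
except the Robin condition, with `u'(1)` a translate of `B`, so one solves for `B`.
-/

lemma intervalIntegrable_sub_rpow_neg {μ : ℝ} (hμ : μ < 1) (p a b : ℝ) :
    IntervalIntegrable (fun t => (t - p) ^ (-μ)) volume a b := by
  simpa using (intervalIntegral.intervalIntegrable_rpow' (a := a - p) (b := b - p)
    (by linarith : -1 < -μ)).comp_sub_right p

lemma Continuous.memLp_restrict_Ioo {E : Type*} [NormedAddCommGroup E] {u : ℝ → E}
    (hu : Continuous u) (r : ENNReal) (a b : ℝ) : MemLp u r (volume.restrict (Ioo a b)) := by
  obtain ⟨C, hC⟩ := isCompact_Icc.exists_bound_of_continuousOn (s := Icc a b) hu.continuousOn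
  refine MemLp.of_bound hu.aestronglyMeasurable C ?_
  filter_upwards [ae_restrict_mem measurableSet_Ioo] with x hx using hC x (Ioo_subset_Icc_self hx)

lemma MeasureTheory.MemLp.integrable_indicator_Ioo {E : Type*} [NormedAddCommGroup E] {f : ℝ → E}
    {r : ENNReal} {a b : ℝ} (hr : 1 ≤ r) (hf : MemLp f r (volume.restrict (Ioo a b))) :
    Integrable ((Ioo a b).indicator f) := by
  rw [integrable_indicator_iff measurableSet_Ioo]
  exact hf.integrable hr

section Primitive

variable {φ : ℝ → ℂ}

lemma continuous_const_add_primitive (hφ : Integrable φ) (A : ℂ) (p : ℝ) :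
    Continuous fun x => A + ∫ t in p..x, φ t :=
  continuous_const.add (intervalIntegral.continuous_primitive (fun _ _ => hφ.intervalIntegrable) p)

lemma const_add_primitive_sub (hφ : Integrable φ) (A : ℂ) (p x y : ℝ) :
    (A + ∫ t in p..y, φ t) - (A + ∫ t in p..x, φ t) = ∫ t in x..y, φ t := by
  rw [add_sub_add_left_eq_sub]
  exact intervalIntegral.integral_interval_sub_left hφ.intervalIntegrable hφ.intervalIntegrable

end Primitive

noncomputable def rpowPrimitive (p μ x : ℝ) : ℝ := ∫ t in p..x, (t - p) ^ (-μ)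

section RpowPrimitive

variable {p μ : ℝ}

@[simp]
lemma rpowPrimitive_self : rpowPrimitive p μ p = 0 := intervalIntegral.integral_same

lemma rpowPrimitive_nonneg {x : ℝ} (h : p ≤ x) : 0 ≤ rpowPrimitive p μ x :=
  intervalIntegral.integral_nonneg h fun t ht => Real.rpow_nonneg (by linarith [ht.1]) _

lemma continuous_rpowPrimitive (hμ : μ < 1) : Continuous (rpowPrimitive p μ) :=
  intervalIntegral.continuous_primitive (intervalIntegrable_sub_rpow_neg hμ p) p

lemma rpowPrimitive_sub_rpowPrimitive (hμ : μ < 1) (x y : ℝ) :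
    rpowPrimitive p μ y - rpowPrimitive p μ x = ∫ t in x..y, (t - p) ^ (-μ) :=
  intervalIntegral.integral_interval_sub_left (intervalIntegrable_sub_rpow_neg hμ p p y)
    (intervalIntegrable_sub_rpow_neg hμ p p x)

end RpowPrimitive

section Homogeneous

variable {p q : ℝ} {ω : ℝ → ℝ} {u u' g v v' h : ℝ → ℂ}

lemma MemV1C.sub (hu : MemV1C p q ω u u') (hv : MemV1C p q ω v v') :
    MemV1C p q ω (u - v) (u' - v') := by
  refine ⟨hu.1.sub hv.1, fun x y hx hxy hy => ?_, ?_⟩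
  · obtain ⟨hu'i, hu_eq⟩ := hu.2.1 x y hx hxy hy
    obtain ⟨hv'i, hv_eq⟩ := hv.2.1 x y hx hxy hy
    refine ⟨hu'i.sub hv'i, ?_⟩
    simp only [Pi.sub_apply, intervalIntegral.integral_sub hu'i hv'i]
    linear_combination hu_eq - hv_eq
  · convert hu.2.2.sub hv.2.2 using 1
    ext x
    simp [smul_sub]

lemma MemV2C.sub (hu : MemV2C p q ω u u' g) (hv : MemV2C p q ω v v' h) :
    MemV2C p q ω (u - v) (u' - v') (g - h) := by
  refine ⟨hu.1.sub hv.1, ?_, hu.2.2.1.sub hv.2.2.1, fun x y hx hxy hy => ?_⟩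
  · convert hu.2.1.sub hv.2.1 using 1
    ext x
    simp [smul_sub]
  · obtain ⟨hgi, hu_eq⟩ := hu.2.2.2 x y hx hxy hy
    obtain ⟨hhi, hv_eq⟩ := hv.2.2.2 x y hx hxy hy
    refine ⟨hgi.sub hhi, ?_⟩
    simp only [Pi.sub_apply, smul_sub, intervalIntegral.integral_sub hgi hhi]
    linear_combination hu_eq - hv_eq

lemma MemV2C.smul_deriv_eq_of_ae_eq_zero (hu : MemV2C p q ω u u' g)
    (hg : g =ᵐ[volume.restrict (Ioo p q)] 0) {x : ℝ} (hx : x ∈ Ioc p q) :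
    ω x • u' x = ω q • u' q := by
  have hg' : g =ᵐ[volume.restrict (uIoc x q)] 0 := by
    rw [uIoc_of_le hx.2]
    exact ae_restrict_of_ae_restrict_of_subset (Ioc_subset_Ioc_left hx.1.le)
      (by rwa [← Measure.restrict_congr_set Ioo_ae_eq_Ioc])
  have hflux := (hu.2.2.2 x q hx.1 hx.2 le_rfl).2
  rw [intervalIntegral.integral_congr_ae_restrict hg'] at hflux
  simpa [sub_eq_zero, eq_comm] using hflux

lemma MemV2C.eq_add_mul_rpowPrimitive {μ : ℝ} {L : ℂ} (hu : MemV2C p q ω u u' g)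
    (hg : g =ᵐ[volume.restrict (Ioo p q)] 0) (hμ : μ < 1)
    (hω : ∀ x, p < x → ω x = (x - p) ^ μ) (hL : Tendsto u (𝓝[>] p) (𝓝 L))
    {y : ℝ} (hy : y ∈ Ioc p q) :
    u y = L + (ω q • u' q) * rpowPrimitive p μ y := by
  set K := ω q • u' q
  have hderiv : ∀ t ∈ Ioc p q, u' t = ((t - p) ^ (-μ) : ℝ) * K := by
    intro t ht
    have htp : 0 < t - p := sub_pos.2 ht.1
    rw [show K = ω t • u' t from (hu.smul_deriv_eq_of_ae_eq_zero hg ht).symm, hω t ht.1,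
      Complex.real_smul, ← mul_assoc, ← Complex.ofReal_mul, ← Real.rpow_add htp,
      neg_add_cancel, Real.rpow_zero, Complex.ofReal_one, one_mul]
  have hincr : ∀ x ∈ Ioc p y, u y - u x = K * (rpowPrimitive p μ y - rpowPrimitive p μ x) := by
    intro x hx
    rw [(hu.1.2.1 x y hx.1 hx.2 hy.2).2, ← Complex.ofReal_sub, rpowPrimitive_sub_rpowPrimitive hμ,
      mul_comm K, ← intervalIntegral.integral_ofReal, ← intervalIntegral.integral_mul_const]
    refine intervalIntegral.integral_congr fun t ht => ?_
    rw [uIcc_of_le hx.2] at ht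
    exact hderiv t ⟨hx.1.trans_le ht.1, ht.2.trans hy.2⟩
  have hlim_left : Tendsto (fun x => u y - u x) (𝓝[>] p) (𝓝 (u y - L)) :=
    tendsto_const_nhds.sub hL
  have hlim_right : Tendsto (fun x => K * (rpowPrimitive p μ y - rpowPrimitive p μ x))
      (𝓝[>] p) (𝓝 (K * rpowPrimitive p μ y)) := by
    have hcont : Continuous fun x => K * (rpowPrimitive p μ y - rpowPrimitive p μ x : ℂ) :=
      continuous_const.mul (continuous_const.sub
        (Complex.continuous_ofReal.comp (continuous_rpowPrimitive hμ)))
    simpa using (hcont.tendsto p).mono_left nhdsWithin_le_nhds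
  have heq : (fun x => u y - u x) =ᶠ[𝓝[>] p]
      fun x => K * (rpowPrimitive p μ y - rpowPrimitive p μ x) := by
    filter_upwards [Ioo_mem_nhdsGT hy.1] with x hx using hincr x ⟨hx.1, hx.2.le⟩
  linear_combination tendsto_nhds_unique (hlim_left.congr' heq) hlim_right

end Homogeneous

namespace SolWeak

variable {γ μa μb : ℝ} {f g : ℝ → ℂ} {c c₁ : ℂ}
  {u u' gu w w' gw u₁ u₁' gu₁ w₁ w₁' gw₁ : ℝ → ℂ}

lemma sub_eq (hμa : μa < 1) (hμb : μb < 1) (h : SolWeak γ μa μb f g c u u' gu w w' gw)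
    (h₁ : SolWeak γ μa μb f g c₁ u₁ u₁' gu₁ w₁ w₁' gw₁) :
    (∀ x ∈ Ioc (0 : ℝ) 1, u₁ x - u x =
      (u₁' 1 - u' 1) * (rpowPrimitive (-1) μb 0 + rpowPrimitive 0 μa x)) ∧
    (∀ x ∈ Ioc (-1 : ℝ) 0, w₁ x - w x = (u₁' 1 - u' 1) * rpowPrimitive (-1) μb x) := by
  obtain ⟨hu, hw, hgu, hgw, hwlim, hulim, hflux, -⟩ := h
  obtain ⟨hu₁, hw₁, hgu₁, hgw₁, hwlim₁, hulim₁, hflux₁, -⟩ := h₁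
  have hdu := hu₁.sub hu
  have hdw := hw₁.sub hw
  have hdgu : gu₁ - gu =ᵐ[volume.restrict (Ioo (0 : ℝ) 1)] 0 := by
    simpa using hgu₁.sub hgu
  have hdgw : gw₁ - gw =ᵐ[volume.restrict (Ioo (-1 : ℝ) 0)] 0 := by
    simpa using hgw₁.sub hgw
  have hK : u₁' 1 - u' 1 = ((1 : ℝ) + 0) ^ μb • (w₁' 0 - w' 0) := by
    have hconst : (fun x : ℝ => x ^ μa • u₁' x - x ^ μa • u' x) =ᶠ[𝓝[>] 0]
        fun _ => u₁' 1 - u' 1 := by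
      filter_upwards [Ioo_mem_nhdsGT one_pos] with x hx
      simpa [smul_sub] using hdu.smul_deriv_eq_of_ae_eq_zero hdgu ⟨hx.1, hx.2.le⟩
    rw [smul_sub]
    exact tendsto_nhds_unique (tendsto_const_nhds.congr' hconst.symm)
      (hflux₁.sub hflux)
  have hw_eq : ∀ x ∈ Ioc (-1 : ℝ) 0, w₁ x - w x = (u₁' 1 - u' 1) * rpowPrimitive (-1) μb x := by
    intro x hx
    have := hdw.eq_add_mul_rpowPrimitive hdgw hμb (fun x _ => by ring_nf) (hwlim₁.sub hwlim) hx
    simpa [hK] using this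
  refine ⟨fun x hx => ?_, hw_eq⟩
  have := hdu.eq_add_mul_rpowPrimitive hdgu hμa (fun x _ => by rw [sub_zero])
    (hulim₁.sub hulim) hx
  simp only [Pi.sub_apply, Real.one_rpow, one_smul] at this
  rw [this, hw_eq 0 ⟨by norm_num, le_rfl⟩]
  ring

lemma robin_sub (hμa : μa < 1) (hμb : μb < 1) (h : SolWeak γ μa μb f g c u u' gu w w' gw)
    (h₁ : SolWeak γ μa μb f g c₁ u₁ u₁' gu₁ w₁ w₁' gw₁) :
    c₁ - c = (u₁' 1 - u' 1) * (γ * (rpowPrimitive (-1) μb 0 + rpowPrimitive 0 μa 1) + 1) := by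
  have hu1 := (h.sub_eq hμa hμb h₁).1 1 ⟨one_pos, le_rfl⟩
  rw [← h.2.2.2.2.2.2.2, ← h₁.2.2.2.2.2.2.2]
  linear_combination (γ : ℂ) * hu1

lemma robin_gain_pos (hγ : 0 ≤ γ) :
    0 < γ * (rpowPrimitive (-1) μb 0 + rpowPrimitive 0 μa 1) + 1 := by
  have := rpowPrimitive_nonneg (μ := μb) (by norm_num : (-1 : ℝ) ≤ 0)
  have := rpowPrimitive_nonneg (μ := μa) zero_le_one
  positivity

lemma unique (hγ : 0 ≤ γ) (hμa : μa < 1) (hμb : μb < 1)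
    (h : SolWeak γ μa μb f g c u u' gu w w' gw)
    (h₁ : SolWeak γ μa μb f g c u₁ u₁' gu₁ w₁ w₁' gw₁) :
    (∀ x ∈ Ioc (0 : ℝ) 1, u₁ x = u x) ∧ (∀ x ∈ Ioc (-1 : ℝ) 0, w₁ x = w x) := by
  have hK : u₁' 1 - u' 1 = 0 := by
    have hgain : (γ * (rpowPrimitive (-1) μb 0 + rpowPrimitive 0 μa 1) + 1 : ℂ) ≠ 0 := by
      exact_mod_cast (robin_gain_pos (μa := μa) (μb := μb) hγ).ne'
    simpa [hgain] using (h.robin_sub hμa hμb h₁).symm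
  obtain ⟨hu, hw⟩ := h.sub_eq hμa hμb h₁
  exact ⟨fun x hx => sub_eq_zero.1 (by simp [hu x hx, hK]),
    fun x hx => sub_eq_zero.1 (by simp [hw x hx, hK])⟩

end SolWeak

noncomputable def fluxDeriv (p μ : ℝ) (H : ℝ → ℂ) (x : ℝ) : ℂ := H x * (((x - p) ^ (-μ) : ℝ) : ℂ)

noncomputable def fluxPrimitive (p μ : ℝ) (H : ℝ → ℂ) (C : ℂ) (x : ℝ) : ℂ :=
  C + ∫ t in p..x, fluxDeriv p μ H t

section Flux

variable {p q μ : ℝ} {ω : ℝ → ℝ} {H φ : ℝ → ℂ}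

lemma rpow_smul_fluxDeriv {x : ℝ} (hx : p < x) : (x - p) ^ μ • fluxDeriv p μ H x = H x := by
  rw [fluxDeriv, Complex.real_smul, mul_left_comm, ← Complex.ofReal_mul,
    ← Real.rpow_add (sub_pos.2 hx), add_neg_cancel, Real.rpow_zero, Complex.ofReal_one, mul_one]

lemma intervalIntegrable_fluxDeriv (hμ : μ < 1) (hH : Continuous H) (a b : ℝ) :
    IntervalIntegrable (fluxDeriv p μ H) volume a b := by
  have h := intervalIntegrable_sub_rpow_neg hμ p a b
  have h' : IntervalIntegrable (fun t => (((t - p) ^ (-μ) : ℝ) : ℂ)) volume a b :=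
    ⟨h.1.ofReal, h.2.ofReal⟩
  exact h'.continuousOn_mul hH.continuousOn

lemma continuous_fluxPrimitive (hμ : μ < 1) (hH : Continuous H) (C : ℂ) :
    Continuous (fluxPrimitive p μ H C) :=
  continuous_const.add
    (intervalIntegral.continuous_primitive (intervalIntegrable_fluxDeriv hμ hH) p)

lemma tendsto_fluxPrimitive (hμ : μ < 1) (hH : Continuous H) (C : ℂ) :
    Tendsto (fluxPrimitive p μ H C) (𝓝[>] p) (𝓝 C) := by
  simpa [fluxPrimitive] using
    ((continuous_fluxPrimitive (p := p) hμ hH C).tendsto p).mono_left nhdsWithin_le_nhds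

lemma tendsto_smul_fluxDeriv (hω : ∀ x, p < x → ω x = (x - p) ^ μ) (hH : ContinuousAt H p) :
    Tendsto (fun x => ω x • fluxDeriv p μ H x) (𝓝[>] p) (𝓝 (H p)) := by
  refine (hH.mono_left nhdsWithin_le_nhds).congr' ?_
  filter_upwards [self_mem_nhdsWithin] with x hx
  rw [hω x hx, rpow_smul_fluxDeriv hx]

lemma norm_sqrt_rpow_smul_fluxDeriv_sq {x : ℝ} (hx : p < x) :
    ‖Real.sqrt ((x - p) ^ μ) • fluxDeriv p μ H x‖ ^ 2 = ‖H x‖ ^ 2 * (x - p) ^ (-μ) := by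
  have hxp := sub_pos.2 hx
  have hexp : (x - p) ^ μ * ((x - p) ^ (-μ)) ^ 2 = (x - p) ^ (-μ) := by
    rw [← Real.rpow_natCast, ← Real.rpow_mul hxp.le, ← Real.rpow_add hxp]
    ring_nf
  rw [norm_smul, fluxDeriv, norm_mul, Complex.norm_real, Real.norm_eq_abs, Real.norm_eq_abs,
    abs_of_nonneg (Real.sqrt_nonneg _), abs_of_pos (Real.rpow_pos_of_pos hxp _), mul_pow,
    mul_pow, Real.sq_sqrt (Real.rpow_nonneg hxp.le _)]
  linear_combination ‖H x‖ ^ 2 * hexp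

lemma memLp_sqrt_smul_fluxDeriv (hμ : μ < 1) (hω : ∀ x, p < x → ω x = (x - p) ^ μ)
    (hH : Continuous H) :
    MemLp (fun x => Real.sqrt (ω x) • fluxDeriv p μ H x) 2 (volume.restrict (Ioo p q)) := by
  obtain ⟨M, hM⟩ := isCompact_Icc.exists_bound_of_continuousOn (s := Icc p q) hH.continuousOn
  have hmeas : AEStronglyMeasurable (fun x => Real.sqrt ((x - p) ^ μ) • fluxDeriv p μ H x)
      (volume.restrict (Ioo p q)) := by
    have := hH.measurable
    apply Measurable.aestronglyMeasurable
    unfold fluxDeriv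
    fun_prop
  have hdom : IntegrableOn (fun x => M ^ 2 * (x - p) ^ (-μ)) (Ioo p q) :=
    ((intervalIntegrable_sub_rpow_neg hμ p p q).1.mono_set Ioo_subset_Ioc_self).const_mul _
  have hconc : MemLp (fun x => Real.sqrt ((x - p) ^ μ) • fluxDeriv p μ H x) 2
      (volume.restrict (Ioo p q)) := by
    rw [memLp_two_iff_integrable_sq_norm hmeas]
    refine hdom.mono' (hmeas.norm.pow 2) ?_
    filter_upwards [ae_restrict_mem measurableSet_Ioo] with x hx
    rw [Real.norm_eq_abs, abs_of_nonneg (sq_nonneg _), norm_sqrt_rpow_smul_fluxDeriv_sq hx.1]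
    exact mul_le_mul_of_nonneg_right (pow_le_pow_left₀ (norm_nonneg _)
      (hM x (Ioo_subset_Icc_self hx)) 2) (Real.rpow_nonneg (sub_pos.2 hx.1).le _)
  refine hconc.ae_eq ?_
  filter_upwards [ae_restrict_mem measurableSet_Ioo] with x hx
  rw [hω x hx.1]

lemma memV2C_fluxPrimitive (hμ : μ < 1) (hω : ∀ x, p < x → ω x = (x - p) ^ μ)
    (hH : Continuous H) (hφ : ∀ a b, IntervalIntegrable φ volume a b)
    (hφ2 : MemLp φ 2 (volume.restrict (Ioo p q)))
    (hHφ : ∀ x y, H y - H x = ∫ t in x..y, φ t) (C : ℂ) :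
    MemV2C p q ω (fluxPrimitive p μ H C) (fluxDeriv p μ H) φ := by
  refine ⟨⟨(continuous_fluxPrimitive hμ hH C).memLp_restrict_Ioo 2 p q,
    fun x y _ _ _ => ⟨intervalIntegrable_fluxDeriv hμ hH x y, ?_⟩,
    memLp_sqrt_smul_fluxDeriv hμ hω hH⟩, ?_, hφ2, fun x y hx hxy _ => ⟨hφ x y, ?_⟩⟩
  · simp only [fluxPrimitive, add_sub_add_left_eq_sub]
    exact intervalIntegral.integral_interval_sub_left
      (intervalIntegrable_fluxDeriv hμ hH p y) (intervalIntegrable_fluxDeriv hμ hH p x)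
  · refine (hH.memLp_restrict_Ioo 2 p q).ae_eq ?_
    filter_upwards [ae_restrict_mem measurableSet_Ioo] with x hx
    rw [hω x hx.1, rpow_smul_fluxDeriv hx.1]
  · rw [hω x hx, hω y (hx.trans_le hxy), rpow_smul_fluxDeriv hx,
      rpow_smul_fluxDeriv (hx.trans_le hxy), hHφ]

end Flux

section Existence

variable {γ μa μb : ℝ} {f g : ℝ → ℂ}

/-- `B` is the flux `b w'` of the solution at `x = -1`; the Robin value `c` is left free. -/
lemma exists_solWeak_with_flux (hμa : μa < 1) (hμb : μb < 1)
    (hf : MemLp f 2 (volume.restrict (Ioo (0 : ℝ) 1)))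
    (hg : MemLp g 2 (volume.restrict (Ioo (-1 : ℝ) 0))) :
    ∃ r : ℂ, ∀ B : ℂ, ∃ u u' gu w w' gw : ℝ → ℂ,
      SolWeak γ μa μb f g (γ * u 1 + u' 1) u u' gu w w' gw ∧ u' 1 = r + B := by
  set fI := (Ioo (0 : ℝ) 1).indicator f
  set gI := (Ioo (-1 : ℝ) 0).indicator g
  have hfI : Integrable fI := hf.integrable_indicator_Ioo one_le_two
  have hgI : Integrable gI := hg.integrable_indicator_Ioo one_le_two
  have hfae : fI =ᵐ[volume.restrict (Ioo (0 : ℝ) 1)] f :=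
    indicator_ae_eq_restrict measurableSet_Ioo
  have hgae : gI =ᵐ[volume.restrict (Ioo (-1 : ℝ) 0)] g :=
    indicator_ae_eq_restrict measurableSet_Ioo
  set G₀ := ∫ t in (-1 : ℝ)..0, gI t
  refine ⟨G₀ + ∫ t in (0 : ℝ)..1, fI t, fun B => ?_⟩
  set Hw : ℝ → ℂ := fun x => B + ∫ t in (-1 : ℝ)..x, gI t
  set Hu : ℝ → ℂ := fun x => (B + G₀) + ∫ t in (0 : ℝ)..x, fI t
  have hHw : Continuous Hw := continuous_const_add_primitive hgI B (-1)
  have hHu : Continuous Hu := continuous_const_add_primitive hfI (B + G₀) 0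
  have hωa : ∀ x : ℝ, 0 < x → x ^ μa = (x - 0) ^ μa := fun x _ => by rw [sub_zero]
  have hωb : ∀ x : ℝ, -1 < x → (1 + x) ^ μb = (x - -1) ^ μb := fun x _ => by ring_nf
  have hflux : ((1 : ℝ) + 0) ^ μb • fluxDeriv (-1) μb Hw 0 = Hu 0 := by
    rw [hωb 0 (by norm_num), rpow_smul_fluxDeriv (by norm_num)]
    simp [Hw, Hu, G₀]
  refine ⟨fluxPrimitive 0 μa Hu (fluxPrimitive (-1) μb Hw 0 0), fluxDeriv 0 μa Hu, fI,
    fluxPrimitive (-1) μb Hw 0, fluxDeriv (-1) μb Hw, gI,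
    ⟨memV2C_fluxPrimitive hμa hωa hHu (fun _ _ => hfI.intervalIntegrable)
      (hf.ae_eq hfae.symm) (const_add_primitive_sub hfI _ _) _,
    memV2C_fluxPrimitive hμb hωb hHw (fun _ _ => hgI.intervalIntegrable)
      (hg.ae_eq hgae.symm) (const_add_primitive_sub hgI _ _) _,
    hfae, hgae, tendsto_fluxPrimitive hμb hHw 0, tendsto_fluxPrimitive hμa hHu _, ?_, rfl⟩, ?_⟩
  · rw [hflux]
    exact tendsto_smul_fluxDeriv hωa hHu.continuousAt
  · simp only [fluxDeriv, Hu, sub_zero, Real.one_rpow, Complex.ofReal_one, mul_one]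
    ring

lemma exists_solWeak (hγ : 0 ≤ γ) (hμa : μa < 1) (hμb : μb < 1)
    (hf : MemLp f 2 (volume.restrict (Ioo (0 : ℝ) 1)))
    (hg : MemLp g 2 (volume.restrict (Ioo (-1 : ℝ) 0))) (c : ℂ) :
    ∃ u u' gu w w' gw : ℝ → ℂ, SolWeak γ μa μb f g c u u' gu w w' gw := by
  obtain ⟨r, hfamily⟩ := exists_solWeak_with_flux (γ := γ) hμa hμb hf hg
  obtain ⟨u₀, u₀', gu₀, w₀, w₀', gw₀, h₀, hr₀⟩ := hfamily 0
  set D : ℂ := γ * (rpowPrimitive (-1) μb 0 + rpowPrimitive 0 μa 1) + 1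
  have hD : D ≠ 0 := by
    simp only [D]
    exact_mod_cast (SolWeak.robin_gain_pos (μa := μa) (μb := μb) hγ).ne'
  obtain ⟨u, u', gu, w, w', gw, h, hr⟩ := hfamily ((c - (γ * u₀ 1 + u₀' 1)) / D)
  have hc : γ * u 1 + u' 1 = c := by
    have hrobin := h₀.robin_sub hμa hμb h
    have hK : u' 1 - u₀' 1 = (c - (γ * u₀ 1 + u₀' 1)) / D := by rw [hr, hr₀]; ring
    rw [hK, div_mul_cancel₀ _ hD] at hrobin
    linear_combination hrobin
  exact ⟨u, u', gu, w, w', gw, hc ▸ h⟩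

end Existence

theorem surjective_weak_general (γ μa μb : ℝ) (hγ : 0 < γ)
    (hμa1 : μa < 1) (hμb1 : μb < 1)
    (f g : ℝ → ℂ) (c : ℂ)
    (hf : MemLp f 2 (volume.restrict (Ioo (0 : ℝ) 1)))
    (hg : MemLp g 2 (volume.restrict (Ioo (-1 : ℝ) 0))) :
    ∃ u u' gu w w' gw : ℝ → ℂ, SolWeak γ μa μb f g c u u' gu w w' gw ∧
      ∀ u₁ u₁' gu₁ w₁ w₁' gw₁ : ℝ → ℂ, SolWeak γ μa μb f g c u₁ u₁' gu₁ w₁ w₁' gw₁ →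
        (∀ x ∈ Ioc (0 : ℝ) 1, u₁ x = u x) ∧ (∀ x ∈ Ioc (-1 : ℝ) 0, w₁ x = w x) := by
  obtain ⟨u, u', gu, w, w', gw, h⟩ := exists_solWeak hγ.le hμa1 hμb1 hf hg c
  exact ⟨u, u', gu, w, w', gw, h, fun _ _ _ _ _ _ h₁ => h.unique hγ.le hμa1 hμb1 h₁⟩

/-- For every `f ∈ L²(0,1)`, `g ∈ L²(-1,0)` and `c ∈ ℂ` there is a unique
pair `(u, w)` (unique as functions on `(0,1]` and `(-1,0]` respectively) with `u ∈ V²_a(0,1)`,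
`w ∈ V²_b(-1,0)` solving the boundary value problem `SolWeak`. -/
theorem surjective_weak (γ μa μb : ℝ) (hγ : 0 < γ)
    (hμa0 : 0 ≤ μa) (hμa1 : μa < 1) (hμb0 : 0 ≤ μb) (hμb1 : μb < 1)
    (f g : ℝ → ℂ) (c : ℂ)
    (hf : MemLp f 2 (volume.restrict (Ioo (0 : ℝ) 1)))
    (hg : MemLp g 2 (volume.restrict (Ioo (-1 : ℝ) 0))) :
    ∃ u u' gu w w' gw : ℝ → ℂ, SolWeak γ μa μb f g c u u' gu w w' gw ∧
      ∀ u₁ u₁' gu₁ w₁ w₁' gw₁ : ℝ → ℂ, SolWeak γ μa μb f g c u₁ u₁' gu₁ w₁ w₁' gw₁ →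
        (∀ x ∈ Ioc (0 : ℝ) 1, u₁ x = u x) ∧ (∀ x ∈ Ioc (-1 : ℝ) 0, w₁ x = w x) :=
  surjective_weak_general γ μa μb hγ hμa1 hμb1 f g c hf hg
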